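/- arXiv:1407.5513 — 2 statements merged into one kernel-verified Lean document; each statement's English description precedes it below -/
import Mathlib

section
/- Let p be a prime, n ≥ 1, Γ a complete set of representatives of ℤ^n/pℤ^n containing 0 with Γ' = Γ \ {0}. Let R be the mask of a finitely supported 1-D filter H : ℤ → ℝ with dilation p, i.e., R(ω) = (1/p) Σ_K H(K) e^{-iKω}, and suppose R(0) = 1. If R is interpolatory (equivalently, H(0) = 1 and H(K) = 0 for all K ∈ pℤ \ {0}), then the prime coset sum mask C_{n,p}[R] is interpolatory: the finitely supported filter h : ℤ^n → ℝ whose mask (1/p^n) Σ_k h(k)e^{-ik·ω} equals C_{n,p}[R] satisfies h(0) = 1 and h(k) = 0 for all k ∈ pℤ^n \ {0}. -/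
/-!
The characters `ω ↦ e^{-ik·ω}`, `k ∈ ℤⁿ`, are linearly independent (Dedekind), so a mask
determines its filter, and expanding `C_{n,p}[R]` gives `h` explicitly:
`h / pⁿ = A (B δ₀ + p⁻¹ Σ_{ν ∈ Γ'} H_ν)` with `A = 1/((p-1)p^{n-1})`, `B = 1 - p^{n-1}`, where
`H_ν` is `H` transported along `K ↦ Kν`. At `k = 0` each of the `pⁿ - 1` vectors `ν ∈ Γ'`
contributes `H 0 = 1`, and `A`, `B` are exactly such that the total is `1`. At `k ∈ pℤⁿ \ {0}`
a contribution needs `k = Kν` with `K ≠ 0`; since `ν ∈ Γ'` is not `≡ 0 mod p` and `p` is prime,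
`p ∣ K`, so `H K = 0`.
-/

open scoped Real Classical

noncomputable section

/-- `eC x = e^{-ix}` as a complex number. -/
def eC (x : ℝ) : ℂ := Complex.exp (-(Complex.I * (x : ℂ)))

open Finsupp

lemma eC_add (x y : ℝ) : eC (x + y) = eC x * eC y := by
  rw [eC, eC, eC, ← Complex.exp_add]
  push_cast
  ring_nf

lemma eC_zero : eC 0 = 1 := by simp [eC]

lemma eC_pi : eC π = -1 := by
  rw [eC, show -(Complex.I * π) = -(π * Complex.I) by ring, Complex.exp_neg,
    Complex.exp_pi_mul_I]
  norm_num

lemma eC_ne_zero (x : ℝ) : eC x ≠ 0 := Complex.exp_ne_zero _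

lemma linearCombination_ofSupportFinite_apply {α β R : Type*} [Semiring R] (v : α → β → R)
    {f : α → R} (hf : (Function.support f).Finite) (x : β) :
    linearCombination R v (ofSupportFinite f hf) x = ∑ᶠ a, f a * v a x := by
  rw [linearCombination_apply, Finsupp.sum, Finset.sum_apply, ofSupportFinite_support,
    finsum_eq_sum_of_support_subset _ (s := hf.toFinset)]
  · simp [ofSupportFinite_coe]
  · intro a ha
    simp only [Function.mem_support, ne_eq] at ha
    simpa using left_ne_zero_of_mul ha

section Characters

variable {ι : Type*} [Fintype ι]

def expChar (k : ι → ℤ) (ω : ι → ℝ) : ℂ := eC (∑ i, (k i : ℝ) * ω i)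

lemma expChar_zero : expChar (0 : ι → ℤ) = 1 := by
  funext ω
  simp [expChar, eC_zero]

lemma expChar_smul (K : ℤ) (ν : ι → ℤ) (ω : ι → ℝ) :
    expChar (K • ν) ω = eC (K * ∑ i, ω i * ν i) := by
  simp only [expChar, Pi.smul_apply, smul_eq_mul, Int.cast_mul, Finset.mul_sum]
  congr 1
  exact Finset.sum_congr rfl fun i _ ↦ by ring

lemma expChar_single [DecidableEq ι] (k : ι → ℤ) (j : ι) (t : ℝ) :
    expChar k (Pi.single j t) = eC (k j * t) := by
  simp [expChar, Pi.single_apply]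

lemma expChar_injective : Function.Injective (expChar (ι := ι)) := by
  intro k k' hkk'
  funext j
  by_contra hne
  have hd : (k j : ℝ) - k' j ≠ 0 := sub_ne_zero.2 (by exact_mod_cast hne)
  set t := π / ((k j : ℝ) - k' j)
  have hshift : (k j : ℝ) * t = k' j * t + π := by
    simp only [t]
    field_simp
    ring
  -- at `t` the two characters differ by the factor `eC π = -1`
  have h := congrFun hkk' (Pi.single j t)
  rw [expChar_single, expChar_single, hshift, eC_add, eC_pi] at h
  exact eC_ne_zero (k' j * t) (by linear_combination -h / 2)

def expCharHom (k : ι → ℤ) : Multiplicative (ι → ℝ) →* ℂ where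
  toFun ω := expChar k ω.toAdd
  map_one' := by simp [expChar, eC_zero]
  map_mul' a b := by
    simp only [expChar, toAdd_mul, Pi.add_apply, mul_add, Finset.sum_add_distrib, eC_add]

theorem linearIndependent_expChar : LinearIndependent ℂ (expChar (ι := ι)) :=
  (linearIndependent_monoidHom (Multiplicative (ι → ℝ)) ℂ).comp expCharHom
    fun k k' h ↦ expChar_injective (by ext ω; exact DFunLike.congr_fun h (.ofAdd ω))

lemma eq_of_finsum_mul_expChar {f : (ι → ℤ) → ℂ}
    (hf : (Function.support f).Finite) (g : (ι → ℤ) →₀ ℂ)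
    (hfg : ∀ ω, ∑ᶠ k, f k * expChar k ω = linearCombination ℂ expChar g ω) (k : ι → ℤ) :
    f k = g k := by
  have hinj : ofSupportFinite f hf = g :=
    linearIndependent_expChar (funext fun ω ↦ by rw [linearCombination_ofSupportFinite_apply, hfg])
  simpa [ofSupportFinite_coe] using DFunLike.congr_fun hinj k

end Characters

section ResidueSystem

variable {ι : Type*}

def IsCompleteResidueSystem (p : ℕ) (Γ : Finset (ι → ℤ)) : Prop :=
  ∀ k : ι → ℤ, ∃! ν : ι → ℤ, ν ∈ Γ ∧ ∃ m : ι → ℤ, k = ν + (p : ℤ) • m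

lemma exists_eq_add_smul_iff_intCast_eq {p : ℕ} {k ν : ι → ℤ} :
    (∃ m : ι → ℤ, k = ν + (p : ℤ) • m) ↔ (fun i ↦ (k i : ZMod p)) = fun i ↦ (ν i : ZMod p) := by
  constructor
  · rintro ⟨m, rfl⟩
    funext i
    simp
  · intro h
    have hdvd (i : ι) : (p : ℤ) ∣ k i - ν i :=
      (ZMod.intCast_eq_intCast_iff_dvd_sub _ _ _).1 (congrFun h i).symm
    choose m hm using hdvd
    exact ⟨m, funext fun i ↦ by simp [← hm i]⟩

namespace IsCompleteResidueSystem

variable {p : ℕ} {Γ : Finset (ι → ℤ)} (hΓ : IsCompleteResidueSystem p Γ)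
include hΓ

lemma injOn_intCast : Set.InjOn (fun (ν : ι → ℤ) i ↦ (ν i : ZMod p)) Γ :=
  fun ν hν ν' hν' h ↦
    ((hΓ ν').unique ⟨hν, exists_eq_add_smul_iff_intCast_eq.2 h.symm⟩ ⟨hν', 0, by simp⟩)

lemma card_eq [Fintype ι] [NeZero p] : Γ.card = p ^ Fintype.card ι := by
  have himage : Γ.image (fun ν i ↦ (ν i : ZMod p)) = Finset.univ := by
    refine Finset.eq_univ_of_forall fun r ↦ ?_
    obtain ⟨ν, ⟨hν, hkν⟩, -⟩ := hΓ fun i ↦ (r i).cast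
    exact Finset.mem_image.2 ⟨ν, hν, by simpa using (exists_eq_add_smul_iff_intCast_eq.1 hkν).symm⟩
  rw [← Finset.card_image_of_injOn hΓ.injOn_intCast, himage, Finset.card_univ,
    Fintype.card_fun, ZMod.card]

lemma eq_zero_of_dvd (hΓ0 : 0 ∈ Γ) {ν : ι → ℤ} (hν : ν ∈ Γ) (hdvd : ∀ i, (p : ℤ) ∣ ν i) :
    ν = 0 :=
  hΓ.injOn_intCast hν hΓ0 <| funext fun i ↦ by
    simpa using (ZMod.intCast_zmod_eq_zero_iff_dvd _ p).2 (hdvd i)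

end IsCompleteResidueSystem

end ResidueSystem

section Dilation

variable {ι N : Type*} [AddCommMonoid N]

lemma mapDomain_smul_apply_zero {ν : ι → ℤ} (hν : ν ≠ 0) (c : ℤ →₀ N) :
    mapDomain (· • ν) c 0 = c 0 := by
  simpa using mapDomain_apply (smul_left_injective ℤ hν) c 0

lemma mapDomain_smul_apply_eq_zero {p : ℤ} (hp : Prime p) {c : ℤ →₀ N}
    (hc : ∀ K, K ≠ 0 → p ∣ K → c K = 0) {ν : ι → ℤ} (hν : ¬ ∀ i, p ∣ ν i)
    {k : ι → ℤ} (hk0 : k ≠ 0) (hk : ∀ i, p ∣ k i) : mapDomain (· • ν) c k = 0 := by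
  by_cases hrange : k ∈ Set.range fun K : ℤ ↦ K • ν
  · obtain ⟨K, rfl⟩ := hrange
    have hν0 : ν ≠ 0 := by rintro rfl; simp at hν
    rw [mapDomain_apply (smul_left_injective ℤ hν0)]
    obtain ⟨i, hi⟩ := not_forall.1 hν
    exact hc K (by rintro rfl; simp at hk0) ((hp.dvd_or_dvd (hk i)).resolve_right hi)
  · exact mapDomain_of_notMem_range _ _ hrange

end Dilation

/-- The coefficient sequence of `C_{n,p}[R]`, as a trigonometric polynomial in `ω`, when
`R ξ = (1/p) Σ_K c K e^{-iKξ}`; the filter of `C_{n,p}[R]` is `pⁿ` times it. -/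
def primeCosetSumCoeff {n : ℕ} (p : ℕ) (Γ : Finset (Fin n → ℤ)) (c : ℤ →₀ ℂ) :
    (Fin n → ℤ) →₀ ℂ :=
  (1 / (((p : ℂ) - 1) * (p : ℂ) ^ (n - 1))) •
    (single 0 (1 - (p : ℂ) ^ (n - 1)) + (1 / (p : ℂ)) • ∑ ν ∈ Γ.erase 0, mapDomain (· • ν) c)

section PrimeCosetSum

variable {n p : ℕ} {Γ : Finset (Fin n → ℤ)}

lemma linearCombination_primeCosetSumCoeff {c : ℤ → ℂ} (hc : (Function.support c).Finite)
    {R : ℝ → ℂ} (hR : ∀ ξ : ℝ, R ξ = (1 / (p : ℂ)) * ∑ᶠ K : ℤ, c K * eC ((K : ℝ) * ξ))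
    (ω : Fin n → ℝ) :
    linearCombination ℂ expChar (primeCosetSumCoeff p Γ (ofSupportFinite c hc)) ω =
      (1 / (((p : ℂ) - 1) * (p : ℂ) ^ (n - 1))) *
        (1 - (p : ℂ) ^ (n - 1) + ∑ ν ∈ Γ.erase 0, R (∑ i, ω i * (ν i : ℝ))) := by
  simp only [primeCosetSumCoeff, map_smul, map_add, map_sum, linearCombination_single,
    linearCombination_mapDomain, Pi.smul_apply, Pi.add_apply, Finset.sum_apply,
    linearCombination_ofSupportFinite_apply, Function.comp_apply, expChar_smul, expChar_zero, hR,
    smul_eq_mul, Pi.one_apply, mul_one, Finset.mul_sum]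

lemma primeCosetSumCoeff_zero (hp : 1 < p) (hn : 1 ≤ n) (hΓ : IsCompleteResidueSystem p Γ)
    (hΓ0 : 0 ∈ Γ) {c : ℤ →₀ ℂ} (hc : c 0 = 1) :
    (p : ℂ) ^ n * primeCosetSumCoeff p Γ c 0 = 1 := by
  have : NeZero p := ⟨by omega⟩
  have hP : (p : ℂ) ≠ 0 := by exact_mod_cast (show p ≠ 0 by omega)
  have hP0 : (p : ℂ) - 1 ≠ 0 := sub_ne_zero.2 (by exact_mod_cast hp.ne')
  have hcard : ((Γ.erase 0).card : ℂ) = (p : ℂ) ^ n - 1 := by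
    rw [Finset.card_erase_of_mem hΓ0, hΓ.card_eq, Fintype.card_fin,
      Nat.cast_sub (Nat.one_le_pow _ _ (by omega))]
    push_cast
    ring
  rw [primeCosetSumCoeff, coe_smul, Pi.smul_apply, coe_add, Pi.add_apply, single_eq_same,
    coe_smul, Pi.smul_apply, coe_finsetSum, Finset.sum_apply,
    Finset.sum_congr rfl fun ν hν ↦ mapDomain_smul_apply_zero (Finset.ne_of_mem_erase hν) c,
    Finset.sum_const, hc, nsmul_one, hcard]
  obtain ⟨m, rfl⟩ := Nat.exists_eq_add_of_le' hn
  simp only [smul_eq_mul, Nat.add_sub_cancel]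
  field_simp
  ring

lemma primeCosetSumCoeff_eq_zero (hp : p.Prime) (hΓ : IsCompleteResidueSystem p Γ)
    (hΓ0 : 0 ∈ Γ) {c : ℤ →₀ ℂ} (hc : ∀ K, K ≠ 0 → (p : ℤ) ∣ K → c K = 0) {k : Fin n → ℤ}
    (hk0 : k ≠ 0) (hk : ∀ i, (p : ℤ) ∣ k i) : primeCosetSumCoeff p Γ c k = 0 := by
  have hsum : ∑ ν ∈ Γ.erase 0, mapDomain (· • ν) c k = 0 :=
    Finset.sum_eq_zero fun ν hν ↦ mapDomain_smul_apply_eq_zero (Nat.prime_iff_prime_int.1 hp) hc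
      (fun hdvd ↦ Finset.ne_of_mem_erase hν
        (hΓ.eq_zero_of_dvd hΓ0 (Finset.mem_of_mem_erase hν) hdvd)) hk0 hk
  rw [primeCosetSumCoeff, coe_smul, Pi.smul_apply, coe_add, Pi.add_apply, single_eq_of_ne hk0,
    coe_smul, Pi.smul_apply, coe_finsetSum, Finset.sum_apply, hsum]
  simp

end PrimeCosetSum

theorem primeCosetSum_interpolatory_general
    (n : ℕ) (hn : 1 ≤ n) (p : ℕ) (hp : p.Prime)
    (Γ : Finset (Fin n → ℤ)) (hΓ0 : (0 : Fin n → ℤ) ∈ Γ)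
    (hΓ : ∀ k : Fin n → ℤ, ∃! ν : Fin n → ℤ,
      ν ∈ Γ ∧ ∃ m : Fin n → ℤ, k = ν + (p : ℤ) • m)
    (H : ℤ → ℝ) (hHfin : (Function.support H).Finite)
    (R : ℝ → ℂ)
    (hR : ∀ ξ : ℝ, R ξ = (1 / (p : ℂ)) * ∑ᶠ K : ℤ, (H K : ℂ) * eC ((K : ℝ) * ξ))
    (hHint : H 0 = 1 ∧ ∀ K : ℤ, K ≠ 0 → (p : ℤ) ∣ K → H K = 0)
    (h : (Fin n → ℤ) → ℝ) (hhfin : (Function.support h).Finite)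
    (hmask : ∀ ω : Fin n → ℝ,
      (1 / (p : ℂ) ^ n) * ∑ᶠ k : Fin n → ℤ, (h k : ℂ) * eC (∑ i, (k i : ℝ) * ω i) =
      (1 / (((p : ℂ) - 1) * (p : ℂ) ^ (n - 1))) *
        (1 - (p : ℂ) ^ (n - 1) + ∑ ν ∈ Γ.erase 0, R (∑ i, ω i * (ν i : ℝ)))) :
    h 0 = 1 ∧ ∀ k : Fin n → ℤ, k ≠ 0 → (∀ i, (p : ℤ) ∣ k i) → h k = 0 := by
  have hp0 : (p : ℂ) ^ n ≠ 0 := pow_ne_zero _ (by exact_mod_cast hp.ne_zero)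
  have hHC : (Function.support fun K ↦ (H K : ℂ)).Finite := hHfin.subset fun _ ↦ by simp
  have hcoeff (k : Fin n → ℤ) :
      (h k : ℂ) = (p : ℂ) ^ n * primeCosetSumCoeff p Γ (ofSupportFinite _ hHC) k :=
    eq_of_finsum_mul_expChar (f := fun k ↦ (h k : ℂ)) (hhfin.subset fun _ ↦ by simp) _ (fun ω ↦ by
      rw [map_smul, Pi.smul_apply, linearCombination_primeCosetSumCoeff hHC hR, ← hmask,
        smul_eq_mul, ← mul_assoc, mul_one_div_cancel hp0, one_mul]
      rfl) k
  refine ⟨?_, fun k hk0 hk ↦ ?_⟩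
  · have h0 := primeCosetSumCoeff_zero hp.one_lt hn hΓ hΓ0 (c := ofSupportFinite _ hHC)
      (by simp [ofSupportFinite_coe, hHint.1])
    exact_mod_cast (hcoeff 0).trans h0
  · have hk' := primeCosetSumCoeff_eq_zero hp hΓ hΓ0 (c := ofSupportFinite _ hHC)
      (fun K hK hpK ↦ by simp [ofSupportFinite_coe, hHint.2 K hK hpK]) hk0 hk
    exact_mod_cast (hcoeff k).trans (by rw [hk', mul_zero] : _ = (0 : ℂ))

/-- **The prime coset sum preserves the interpolatory property.**  If the 1-D mask `R`
of a finitely supported filter `H` (with dilation `p`) is interpolatory, i.e. `H 0 = 1`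
and `H K = 0` for `K ∈ pℤ \ {0}`, then the filter `h` of the prime coset sum mask
`C_{n,p}[R]` is interpolatory: `h 0 = 1` and `h k = 0` for all `k ∈ pℤ^n \ {0}`. -/
theorem primeCosetSum_interpolatory
    (n : ℕ) (hn : 1 ≤ n) (p : ℕ) (hp : p.Prime)
    (Γ : Finset (Fin n → ℤ)) (hΓ0 : (0 : Fin n → ℤ) ∈ Γ)
    (hΓ : ∀ k : Fin n → ℤ, ∃! ν : Fin n → ℤ,
      ν ∈ Γ ∧ ∃ m : Fin n → ℤ, k = ν + (p : ℤ) • m)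
    (H : ℤ → ℝ) (hHfin : (Function.support H).Finite)
    (R : ℝ → ℂ)
    (hR : ∀ ξ : ℝ, R ξ = (1 / (p : ℂ)) * ∑ᶠ K : ℤ, (H K : ℂ) * eC ((K : ℝ) * ξ))
    (hR0 : R 0 = 1)
    (hHint : H 0 = 1 ∧ ∀ K : ℤ, K ≠ 0 → (p : ℤ) ∣ K → H K = 0)
    (h : (Fin n → ℤ) → ℝ) (hhfin : (Function.support h).Finite)
    (hmask : ∀ ω : Fin n → ℝ,
      (1 / (p : ℂ) ^ n) * ∑ᶠ k : Fin n → ℤ, (h k : ℂ) * eC (∑ i, (k i : ℝ) * ω i) =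
      (1 / (((p : ℂ) - 1) * (p : ℂ) ^ (n - 1))) *
        (1 - (p : ℂ) ^ (n - 1) + ∑ ν ∈ Γ.erase 0, R (∑ i, ω i * (ν i : ℝ)))) :
    h 0 = 1 ∧ ∀ k : Fin n → ℤ, k ≠ 0 → (∀ i, (p : ℤ) ∣ k i) → h k = 0 :=
  primeCosetSum_interpolatory_general n hn p hp Γ hΓ0 hΓ H hHfin R hR hHint h hhfin hmask
end
end

section
/- Let p be a prime, n ≥ 1, Γ a complete set of representatives of ℤ^n/pℤ^n containing 0 with Γ' = Γ \ {0}, and Γ* a complete set of representatives of 2π((p^{-1}ℤ^n)/ℤ^n) containing 0. Suppose S and U are masks of finitely supported 1-D lowpass filters with dilation p (S(0) = U(0) = 1), and U is interpolatory. Then the two n-D refinement masks C_{n,p}[U] and τ, where τ(ω) := C_{n,p}[S](ω) + (1 − Σ_{γ∈Γ*} C_{n,p}[S](ω+γ) \overline{C_{n,p}[U](ω+γ)}), are biorthogonal with dilation p·I_n: Σ_{γ∈Γ*} \overline{τ(ω+γ)}·C_{n,p}[U](ω+γ) = 1 for every ω ∈ ℝ^n. -/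
open scoped Real Classical

noncomputable section

/-!
Trigonometric polynomials are `2π`-periodic, so `C_{n,p}[S]` and `C_{n,p}[U]` are
`2πℤⁿ`-periodic. Hence a sum over `Γ*` of translates of such a function can be computed over
`(ℤ/p)ⁿ`, and is unchanged when `ω` is translated by an element of `Γ*`. In particular the
correlation `B(ω) = Σ_γ C[S](ω+γ) conj C[U](ω+γ)` is constant along `ω + Γ*`, so
`τ(ω+γ) = C[S](ω+γ) + 1 - B(ω)` and
`Σ_γ conj τ(ω+γ) C[U](ω+γ) = conj B(ω) + (1 - conj B(ω)) Σ_γ C[U](ω+γ)`.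
It remains to see `Σ_γ C[U](ω+γ) = 1`. For `ν ∈ Γ'` the reduction of `ν` mod `p` is nonzero,
so `c ↦ c ⬝ᵥ ν` is onto `ℤ/p` with fibres of size `p^{n-1}`; the interpolatory identity then
gives `Σ_c U(ω·ν + 2π(c·ν)/p) = p^{n-1}`, and the normalisation of `C_{n,p}` makes the total `1`.
-/

open Finset Function ComplexConjugate

lemma eC_periodic : Periodic eC (2 * π) := fun x => by
  rw [eC, eC, show -(Complex.I * ((x + 2 * π : ℝ) : ℂ)) = -(Complex.I * x) - 2 * π * Complex.I by
    push_cast; ring]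
  exact Complex.exp_periodic.sub_eq _

lemma periodic_of_eq_finsum_eC {c : ℂ} {G : ℤ → ℝ} {S : ℝ → ℂ}
    (hS : ∀ ξ : ℝ, S ξ = c * ∑ᶠ K : ℤ, (G K : ℂ) * eC ((K : ℝ) * ξ)) :
    Periodic S (2 * π) := fun ξ => by
  simp only [hS, mul_add, eC_periodic.int_mul _ _]

def IsTwoPiPeriodic {n : ℕ} {β : Type*} (F : (Fin n → ℝ) → β) : Prop :=
  ∀ (x : Fin n → ℝ) (l : Fin n → ℤ), F (x + fun i => 2 * π * (l i : ℝ)) = F x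

lemma sum_add_mul_intCast_mul {n : ℕ} (x : Fin n → ℝ) (a : ℝ) (m ν : Fin n → ℤ) :
    ∑ i, (x i + a * (m i : ℝ)) * (ν i : ℝ)
      = ∑ i, x i * (ν i : ℝ) + a * ((∑ i, m i * ν i : ℤ) : ℝ) := by
  push_cast
  rw [mul_sum, ← sum_add_distrib]
  exact sum_congr rfl fun i _ => by ring

/-- The prime coset sum `C_{n,p}[R]`; the paper's `Γ'` is `Γ.erase 0`. -/
def primeCosetSum {n : ℕ} (p : ℕ) (Γ : Finset (Fin n → ℤ)) (R : ℝ → ℂ) (ω : Fin n → ℝ) : ℂ :=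
  (1 / (((p : ℂ) - 1) * (p : ℂ) ^ (n - 1))) *
    (1 - (p : ℂ) ^ (n - 1) + ∑ ν ∈ Γ.erase 0, R (∑ i, ω i * (ν i : ℝ)))

lemma isTwoPiPeriodic_primeCosetSum {n p : ℕ} {Γ : Finset (Fin n → ℤ)} {R : ℝ → ℂ}
    (hR : Periodic R (2 * π)) : IsTwoPiPeriodic (primeCosetSum p Γ R) := fun x l => by
  simp only [primeCosetSum, Pi.add_apply, sum_add_mul_intCast_mul]
  simp only [mul_comm (2 * π), (hR.int_mul _ _ :)]

def IsCosetReps {n : ℕ} (p : ℕ) (Γ : Finset (Fin n → ℤ)) : Prop :=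
  ∀ k : Fin n → ℤ, ∃! ν : Fin n → ℤ, ν ∈ Γ ∧ ∃ m : Fin n → ℤ, k = ν + (p : ℤ) • m

/-- `Γs` is a complete set of representatives of `2π(p⁻¹ℤⁿ/ℤⁿ)`, the paper's `Γ*`. -/
def IsDualCosetReps {n : ℕ} (p : ℕ) (Γs : Finset (Fin n → ℝ)) : Prop :=
  (∀ γ ∈ Γs, ∃ m : Fin n → ℤ, γ = fun i => 2 * π / p * (m i : ℝ)) ∧
  ∀ m : Fin n → ℤ, ∃! γ : Fin n → ℝ, γ ∈ Γs ∧
    ∃ l : Fin n → ℤ, (fun i => 2 * π / p * (m i : ℝ)) = γ + (fun i => 2 * π * (l i : ℝ))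

namespace IsCosetReps

variable {n p : ℕ} {Γ : Finset (Fin n → ℤ)}

lemma eq_of_intCast_eq (hΓ : IsCosetReps p Γ) {ν₁ ν₂ : Fin n → ℤ} (h₁ : ν₁ ∈ Γ) (h₂ : ν₂ ∈ Γ)
    (h : ∀ i, (ν₁ i : ZMod p) = ν₂ i) : ν₁ = ν₂ := by
  choose m hm using fun i => (ZMod.intCast_eq_intCast_iff_dvd_sub _ _ _).mp (h i)
  exact (hΓ ν₂).unique ⟨h₂, 0, by simp⟩ ⟨h₁, m, funext fun i => by simp [← hm i]⟩ |>.symm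

lemma card_eq [NeZero p] (hΓ : IsCosetReps p Γ) : #Γ = p ^ n := by
  rw [show p ^ n = #(univ : Finset (Fin n → ZMod p)) by simp [ZMod.card]]
  refine card_bij (fun ν _ i => (ν i : ZMod p)) (fun _ _ => mem_univ _)
    (fun ν₁ h₁ ν₂ h₂ h => hΓ.eq_of_intCast_eq h₁ h₂ (congrFun h)) fun c _ => ?_
  obtain ⟨ν, ⟨hν, m, hk⟩, -⟩ := hΓ fun i => (c i).val
  refine ⟨ν, hν, funext fun i => ?_⟩
  simpa using (congrArg (fun k : Fin n → ℤ => (k i : ZMod p)) hk).symm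

lemma intCast_ne_zero (hΓ : IsCosetReps p Γ) (hΓ0 : 0 ∈ Γ) {ν : Fin n → ℤ}
    (hν : ν ∈ Γ.erase 0) : (fun i => (ν i : ZMod p)) ≠ 0 := fun h =>
  ne_of_mem_erase hν (hΓ.eq_of_intCast_eq (mem_of_mem_erase hν) hΓ0 (by simpa using congrFun h))

end IsCosetReps

section DualCosetReps

variable {n p : ℕ} [NeZero p]

lemma two_pi_div_mul_intCast_eq (K : ℤ) :
    2 * π / p * (K : ℝ)
      = 2 * π / p * (((K : ZMod p).val : ℤ) : ℝ) + 2 * π * ((K / p : ℤ) : ℝ) := by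
  have hp : (p : ℝ) ≠ 0 := Nat.cast_ne_zero.mpr (NeZero.ne p)
  rw [ZMod.val_intCast]
  field_simp
  exact_mod_cast congrArg (Int.cast : ℤ → ℝ) (Int.emod_add_mul_ediv K p).symm

lemma eq_add_mul_of_two_pi_div_mul_eq {a b l : ℤ}
    (h : 2 * π / p * (a : ℝ) = 2 * π / p * (b : ℝ) + 2 * π * (l : ℝ)) : a = b + p * l := by
  have hp : (p : ℝ) ≠ 0 := Nat.cast_ne_zero.mpr (NeZero.ne p)
  field_simp at h
  exact_mod_cast h

lemma Function.Periodic.apply_add_two_pi_div_mul {R : ℝ → ℂ} (hR : Periodic R (2 * π))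
    (ξ : ℝ) (K : ℤ) :
    R (ξ + 2 * π / p * (K : ℝ)) = R (ξ + 2 * π / p * (((K : ZMod p).val : ℤ) : ℝ)) := by
  rw [two_pi_div_mul_intCast_eq K, ← add_assoc, mul_comm (2 * π), hR.int_mul]

lemma IsTwoPiPeriodic.apply_add_two_pi_div_mul {β : Type*} {F : (Fin n → ℝ) → β}
    (hF : IsTwoPiPeriodic F) (x : Fin n → ℝ) (m : Fin n → ℤ) :
    F (x + fun i => 2 * π / p * (m i : ℝ))
      = F (x + fun i => 2 * π / p * (((m i : ZMod p).val : ℤ) : ℝ)) := by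
  have hsplit : (fun i => 2 * π / p * (m i : ℝ))
      = (fun i => 2 * π / p * (((m i : ZMod p).val : ℤ) : ℝ))
        + fun i => 2 * π * ((m i / p : ℤ) : ℝ) :=
    funext fun i => two_pi_div_mul_intCast_eq (m i)
  rw [hsplit, ← add_assoc, hF]

variable {Γs : Finset (Fin n → ℝ)} {M : Type*} [AddCommMonoid M] {F : (Fin n → ℝ) → M}

/-- The bijection `(ℤ/p)ⁿ → Γs` sends `c` to the representative of `2π c / p`. -/
lemma IsDualCosetReps.sum_eq_sum_zmod (hΓs : IsDualCosetReps p Γs) (hF : IsTwoPiPeriodic F)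
    (ω : Fin n → ℝ) :
    ∑ γ ∈ Γs, F (ω + γ)
      = ∑ c : Fin n → ZMod p, F (ω + fun i => 2 * π / p * (((c i).val : ℤ) : ℝ)) := by
  choose ψ hψ hψ_unique using fun c : Fin n → ZMod p => hΓs.2 fun i => (c i).val
  refine (sum_bij (fun c _ => ψ c) (fun c _ => (hψ c).1) (fun c₁ _ c₂ _ h => ?_) (fun γ hγ => ?_)
    (fun c _ => ?_)).symm
  · obtain ⟨l₁, hl₁⟩ := (hψ c₁).2
    obtain ⟨l₂, hl₂⟩ := (hψ c₂).2
    funext i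
    have hval : ((c₁ i).val : ℤ) = (c₂ i).val + p * (l₁ i - l₂ i) := by
      refine eq_add_mul_of_two_pi_div_mul_eq ?_
      have e₁ := congrFun hl₁ i
      have e₂ := congrFun hl₂ i
      simp only [Pi.add_apply, h] at e₁ e₂
      push_cast
      linear_combination e₁ - e₂
    simpa using congrArg (Int.cast : ℤ → ZMod p) hval
  · obtain ⟨m, rfl⟩ := hΓs.1 γ hγ
    refine ⟨fun i => m i, mem_univ _, (hψ_unique _ _ ⟨hγ, fun i => -(m i / p), ?_⟩).symm⟩
    funext i
    simp only [Pi.add_apply, two_pi_div_mul_intCast_eq (p := p) (m i)]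
    push_cast
    ring
  · obtain ⟨l, hl⟩ := (hψ c).2
    rw [hl, ← add_assoc, hF]

lemma IsDualCosetReps.sum_add_left (hΓs : IsDualCosetReps p Γs) (hF : IsTwoPiPeriodic F)
    (ω : Fin n → ℝ) {γ : Fin n → ℝ} (hγ : γ ∈ Γs) :
    ∑ γ' ∈ Γs, F (ω + γ + γ') = ∑ γ' ∈ Γs, F (ω + γ') := by
  obtain ⟨m, rfl⟩ := hΓs.1 γ hγ
  rw [hΓs.sum_eq_sum_zmod hF, hΓs.sum_eq_sum_zmod hF]
  refine Fintype.sum_equiv (Equiv.addLeft fun i => (m i : ZMod p)) _ _ fun c => ?_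
  have hsum : ((fun i => 2 * π / p * (m i : ℝ)) + fun i => 2 * π / p * (((c i).val : ℤ) : ℝ))
      = fun i => 2 * π / p * ((m i + (c i).val : ℤ) : ℝ) := by
    funext i
    simp only [Pi.add_apply]
    push_cast
    ring
  rw [add_assoc, hsum, hF.apply_add_two_pi_div_mul]
  congr 3 with i
  push_cast [ZMod.natCast_val, ZMod.cast_id]
  rfl

end DualCosetReps

section DotProduct

variable {K : Type*} [Field K] {n : ℕ} {ν : Fin n → K}

lemma dotProduct_left_surjective (hν : ν ≠ 0) : Surjective (· ⬝ᵥ ν) := fun s => by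
  obtain ⟨j, hj⟩ := Function.ne_iff.mp hν
  exact ⟨Pi.single j (s * (ν j)⁻¹), by simp [single_dotProduct, inv_mul_cancel_right₀ hj]⟩

variable [Fintype K]

lemma card_filter_dotProduct_eq (hν : ν ≠ 0) (t : K) :
    #{c : Fin n → K | c ⬝ᵥ ν = t} = Fintype.card K ^ (n - 1) := by
  let f : (Fin n → K) →+ K := AddMonoidHom.mk' (· ⬝ᵥ ν) fun a b => add_dotProduct a b ν
  have hfiber : ∀ s, #{c | f c = s} = #{c | f c = 0} := fun s =>
    AddMonoidHom.card_fiber_eq_of_mem_range f (dotProduct_left_surjective hν s)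
      (dotProduct_left_surjective hν 0)
  have htotal : Fintype.card K * #{c | f c = 0} = Fintype.card K * Fintype.card K ^ (n - 1) :=
    calc Fintype.card K * #{c | f c = 0} = ∑ s : K, #{c | f c = s} := by simp [hfiber]
      _ = Fintype.card K ^ n := by
        rw [← card_eq_sum_card_fiberwise fun c _ => mem_univ (f c)]
        simp
      _ = Fintype.card K * Fintype.card K ^ (n - 1) := by
        obtain ⟨j, -⟩ := Function.ne_iff.mp hν
        rw [← pow_succ', Nat.sub_add_cancel (Fin.pos j)]
  exact (hfiber t).trans (Nat.eq_of_mul_eq_mul_left Fintype.card_pos htotal)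

lemma sum_comp_dotProduct (hν : ν ≠ 0) {M : Type*} [AddCommMonoid M] (g : K → M) :
    ∑ c : Fin n → K, g (c ⬝ᵥ ν) = Fintype.card K ^ (n - 1) • ∑ t, g t := by
  rw [sum_comp, image_univ_of_surjective (dotProduct_left_surjective hν), smul_sum]
  exact sum_congr rfl fun t _ => by rw [card_filter_dotProduct_eq hν]

end DotProduct

def IsInterpolatory (p : ℕ) (R : ℝ → ℂ) : Prop :=
  ∀ ξ : ℝ, ∑ l ∈ range p, R (ξ + 2 * π * l / p) = 1

lemma ZMod.sum_val_eq_sum_range {p : ℕ} [NeZero p] {M : Type*} [AddCommMonoid M] (f : ℕ → M) :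
    ∑ t : ZMod p, f t.val = ∑ l ∈ range p, f l := by
  obtain ⟨k, rfl⟩ := Nat.exists_eq_succ_of_ne_zero (NeZero.ne p)
  exact Fin.sum_univ_eq_sum_range f (k + 1)

lemma IsInterpolatory.sum_dotProduct_eq_pow {n p : ℕ} [Fact p.Prime] {R : ℝ → ℂ}
    (hR : Periodic R (2 * π)) (hRint : IsInterpolatory p R) {ν : Fin n → ℤ}
    (hν : (fun i => (ν i : ZMod p)) ≠ 0) (ξ : ℝ) :
    ∑ c : Fin n → ZMod p, R (ξ + 2 * π / p * ((∑ i, ((c i).val : ℤ) * ν i : ℤ) : ℝ))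
      = (p : ℂ) ^ (n - 1) := by
  calc ∑ c : Fin n → ZMod p, R (ξ + 2 * π / p * ((∑ i, ((c i).val : ℤ) * ν i : ℤ) : ℝ))
      = ∑ c : Fin n → ZMod p,
          R (ξ + 2 * π / p * (((c ⬝ᵥ fun i => (ν i : ZMod p)).val : ℤ) : ℝ)) := by
        refine sum_congr rfl fun c _ => ?_
        rw [hR.apply_add_two_pi_div_mul]
        push_cast [ZMod.natCast_val, ZMod.cast_id]
        rfl
    _ = p ^ (n - 1) • ∑ l ∈ range p, R (ξ + 2 * π * l / p) := by
        rw [sum_comp_dotProduct hν fun t => R (ξ + 2 * π / p * ((t.val : ℤ) : ℝ)),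
          ZMod.card, ← ZMod.sum_val_eq_sum_range fun l : ℕ => R (ξ + 2 * π * l / p)]
        congr! 4 with t
        push_cast
        ring
    _ = (p : ℂ) ^ (n - 1) := by simp [hRint ξ]

lemma IsDualCosetReps.sum_primeCosetSum {n p : ℕ} (hn : 1 ≤ n) [Fact p.Prime]
    {Γ : Finset (Fin n → ℤ)} (hΓ : IsCosetReps p Γ) (hΓ0 : 0 ∈ Γ)
    {Γs : Finset (Fin n → ℝ)} (hΓs : IsDualCosetReps p Γs) {R : ℝ → ℂ}
    (hR : Periodic R (2 * π)) (hRint : IsInterpolatory p R) (ω : Fin n → ℝ) :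
    ∑ γ ∈ Γs, primeCosetSum p Γ R (ω + γ) = 1 := by
  have hinner : ∀ ν ∈ Γ.erase 0, ∑ c : Fin n → ZMod p,
      R (∑ i, (ω + fun i => 2 * π / p * (((c i).val : ℤ) : ℝ)) i * (ν i : ℝ))
        = (p : ℂ) ^ (n - 1) := fun ν hν => by
    simp only [Pi.add_apply, sum_add_mul_intCast_mul]
    exact hRint.sum_dotProduct_eq_pow hR (hΓ.intCast_ne_zero hΓ0 hν) _
  have hp0 : (p : ℂ) ≠ 0 := Nat.cast_ne_zero.mpr (NeZero.ne p)
  have hp1 : (p : ℂ) - 1 ≠ 0 :=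
    sub_ne_zero.mpr (by exact_mod_cast (Fact.out : p.Prime).one_lt.ne')
  have hpow : (p : ℂ) ^ n = p * p ^ (n - 1) := by rw [← pow_succ', Nat.sub_add_cancel hn]
  rw [hΓs.sum_eq_sum_zmod (isTwoPiPeriodic_primeCosetSum hR)]
  simp only [primeCosetSum, ← mul_sum, sum_add_distrib, sum_const, card_univ]
  rw [sum_comm, sum_congr rfl hinner, sum_const, card_erase_of_mem hΓ0, hΓ.card_eq]
  simp only [Fintype.card_fun, ZMod.card, Fintype.card_fin, nsmul_eq_mul,
    Nat.cast_sub (Nat.one_le_pow _ _ (Fact.out : p.Prime).pos), Nat.cast_pow, Nat.cast_one, hpow]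
  field_simp
  ring

lemma sum_conj_mul_eq_one {ι : Type*} {s : Finset ι} {a b t : ι → ℂ} {B : ℂ}
    (hB : ∑ i ∈ s, a i * conj (b i) = B) (ht : ∀ i ∈ s, t i = a i + (1 - B))
    (hb : ∑ i ∈ s, b i = 1) : ∑ i ∈ s, conj (t i) * b i = 1 :=
  calc ∑ i ∈ s, conj (t i) * b i = ∑ i ∈ s, conj (a i) * b i + (1 - conj B) * ∑ i ∈ s, b i := by
        rw [mul_sum, ← sum_add_distrib]
        exact sum_congr rfl fun i hi => by rw [ht i hi, map_add, map_sub, map_one]; ring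
    _ = 1 := by
        rw [hb, ← hB, map_sum]
        simp only [map_mul, Complex.conj_conj, mul_comm (conj _)]
        ring

theorem primeCosetSum_modified_biorthogonal_general
    (n : ℕ) (hn : 1 ≤ n) (p : ℕ) (hp : p.Prime)
    (Γ : Finset (Fin n → ℤ)) (hΓ0 : (0 : Fin n → ℤ) ∈ Γ)
    (hΓ : ∀ k : Fin n → ℤ, ∃! ν : Fin n → ℤ,
      ν ∈ Γ ∧ ∃ m : Fin n → ℤ, k = ν + (p : ℤ) • m)
    (Γs : Finset (Fin n → ℝ))
    (hΓsSub : ∀ γ ∈ Γs, ∃ m : Fin n → ℤ, γ = fun i => 2 * π / p * (m i : ℝ))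
    (hΓsRep : ∀ m : Fin n → ℤ, ∃! γ : Fin n → ℝ, γ ∈ Γs ∧
      ∃ l : Fin n → ℤ, (fun i => 2 * π / p * (m i : ℝ)) = γ + (fun i => 2 * π * (l i : ℝ)))
    (G H : ℤ → ℝ)
    (S U : ℝ → ℂ)
    (hS : ∀ ξ : ℝ, S ξ = (1 / (p : ℂ)) * ∑ᶠ K : ℤ, (G K : ℂ) * eC ((K : ℝ) * ξ))
    (hU : ∀ ξ : ℝ, U ξ = (1 / (p : ℂ)) * ∑ᶠ K : ℤ, (H K : ℂ) * eC ((K : ℝ) * ξ))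
    -- `U` is interpolatory
    (hUint : ∀ ξ : ℝ, ∑ l ∈ Finset.range p, U (ξ + 2 * π * l / p) = 1)
    (CS CU : (Fin n → ℝ) → ℂ)
    (hCS : ∀ ω : Fin n → ℝ, CS ω = (1 / (((p : ℂ) - 1) * (p : ℂ) ^ (n - 1))) *
      (1 - (p : ℂ) ^ (n - 1) + ∑ ν ∈ Γ.erase 0, S (∑ i, ω i * (ν i : ℝ))))
    (hCU : ∀ ω : Fin n → ℝ, CU ω = (1 / (((p : ℂ) - 1) * (p : ℂ) ^ (n - 1))) *
      (1 - (p : ℂ) ^ (n - 1) + ∑ ν ∈ Γ.erase 0, U (∑ i, ω i * (ν i : ℝ))))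
    (τ : (Fin n → ℝ) → ℂ)
    (hτ : ∀ ω : Fin n → ℝ, τ ω = CS ω +
      (1 - ∑ γ ∈ Γs, CS (ω + γ) * (starRingEnd ℂ) (CU (ω + γ)))) :
    ∀ ω : Fin n → ℝ, ∑ γ ∈ Γs, (starRingEnd ℂ) (τ (ω + γ)) * CU (ω + γ) = 1 := by
  have := Fact.mk hp
  have hSper := periodic_of_eq_finsum_eC hS
  have hUper := periodic_of_eq_finsum_eC hU
  have hΓs : IsDualCosetReps p Γs := ⟨hΓsSub, hΓsRep⟩
  obtain rfl : CS = primeCosetSum p Γ S := funext hCS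
  obtain rfl : CU = primeCosetSum p Γ U := funext hCU
  have hcorr : IsTwoPiPeriodic fun x => primeCosetSum p Γ S x * conj (primeCosetSum p Γ U x) :=
    fun x l => by
      simp only [isTwoPiPeriodic_primeCosetSum hSper x l, isTwoPiPeriodic_primeCosetSum hUper x l]
  intro ω
  refine sum_conj_mul_eq_one (a := fun γ => primeCosetSum p Γ S (ω + γ)) rfl (fun γ hγ => ?_)
    (hΓs.sum_primeCosetSum hn hΓ hΓ0 hUper hUint ω)
  rw [hτ, ← hΓs.sum_add_left hcorr ω hγ]

/-- **Corollary 1 (biorthogonality).**  Let `S, U` be masks of finitely supported 1-D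
lowpass filters with prime dilation `p`, with `U` interpolatory.  Then the `n`-D
refinement masks `C_{n,p}[U]` and
`τ = C_{n,p}[S] + (1 - Σ_{γ∈Γ*} C_{n,p}[S](·+γ) conj(C_{n,p}[U](·+γ)))` are biorthogonal
with dilation `p·Iₙ`. -/
theorem primeCosetSum_modified_biorthogonal
    (n : ℕ) (hn : 1 ≤ n) (p : ℕ) (hp : p.Prime)
    (Γ : Finset (Fin n → ℤ)) (hΓ0 : (0 : Fin n → ℤ) ∈ Γ)
    (hΓ : ∀ k : Fin n → ℤ, ∃! ν : Fin n → ℤ,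
      ν ∈ Γ ∧ ∃ m : Fin n → ℤ, k = ν + (p : ℤ) • m)
    (Γs : Finset (Fin n → ℝ)) (hΓs0 : (0 : Fin n → ℝ) ∈ Γs)
    (hΓsSub : ∀ γ ∈ Γs, ∃ m : Fin n → ℤ, γ = fun i => 2 * π / p * (m i : ℝ))
    (hΓsRep : ∀ m : Fin n → ℤ, ∃! γ : Fin n → ℝ, γ ∈ Γs ∧
      ∃ l : Fin n → ℤ, (fun i => 2 * π / p * (m i : ℝ)) = γ + (fun i => 2 * π * (l i : ℝ)))
    (G H : ℤ → ℝ)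
    (hGfin : (Function.support G).Finite) (hHfin : (Function.support H).Finite)
    (S U : ℝ → ℂ)
    (hS : ∀ ξ : ℝ, S ξ = (1 / (p : ℂ)) * ∑ᶠ K : ℤ, (G K : ℂ) * eC ((K : ℝ) * ξ))
    (hU : ∀ ξ : ℝ, U ξ = (1 / (p : ℂ)) * ∑ᶠ K : ℤ, (H K : ℂ) * eC ((K : ℝ) * ξ))
    (hSlow : S 0 = 1) (hUlow : U 0 = 1)
    -- `U` is interpolatory
    (hUint : ∀ ξ : ℝ, ∑ l ∈ Finset.range p, U (ξ + 2 * π * l / p) = 1)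
    (CS CU : (Fin n → ℝ) → ℂ)
    (hCS : ∀ ω : Fin n → ℝ, CS ω = (1 / (((p : ℂ) - 1) * (p : ℂ) ^ (n - 1))) *
      (1 - (p : ℂ) ^ (n - 1) + ∑ ν ∈ Γ.erase 0, S (∑ i, ω i * (ν i : ℝ))))
    (hCU : ∀ ω : Fin n → ℝ, CU ω = (1 / (((p : ℂ) - 1) * (p : ℂ) ^ (n - 1))) *
      (1 - (p : ℂ) ^ (n - 1) + ∑ ν ∈ Γ.erase 0, U (∑ i, ω i * (ν i : ℝ))))
    (τ : (Fin n → ℝ) → ℂ)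
    (hτ : ∀ ω : Fin n → ℝ, τ ω = CS ω +
      (1 - ∑ γ ∈ Γs, CS (ω + γ) * (starRingEnd ℂ) (CU (ω + γ)))) :
    ∀ ω : Fin n → ℝ, ∑ γ ∈ Γs, (starRingEnd ℂ) (τ (ω + γ)) * CU (ω + γ) = 1 :=
  primeCosetSum_modified_biorthogonal_general n hn p hp Γ hΓ0 hΓ Γs hΓsSub hΓsRep G H S U hS hU
    hUint CS CU hCS hCU τ hτ
end
end
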